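/- If p ∈ PGL(2,ℤ) has order 2 and commutes with [T], then p equals [S], [N], or [T]. -/

import Mathlib

/-!
Lift `p` to `M ∈ GL(2,ℤ)`. Since the center of `GL(2,ℤ)` is `{±1}`, `p` commutes with `[T]`
exactly when `M T = ± T M`. If `M T = T M`, then `M = !![a, b; -b, a]` with
`a² + b² = det M = 1`, so `M ∈ {±1, ±T}`. If `M T = -T M`, then `N M` commutes with `T` because `N T = -T N`, so
`M ∈ {±N, ±N T} = {±N, ±S}`. An element of order 2 is not `[1]`.
-/

open Matrix

abbrev GL2Z := GL (Fin 2) ℤ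

/-- PGL(2,ℤ): the quotient of GL(2,ℤ) by its center {I, -I}. -/
abbrev PGL2Z := GL2Z ⧸ Subgroup.center GL2Z

/-- The image of a matrix in PGL(2,ℤ). -/
def cls (M : GL2Z) : PGL2Z := QuotientGroup.mk M

def Smat : GL2Z := ⟨!![0,1;1,0], !![0,1;1,0], by decide, by decide⟩
def Nmat : GL2Z := ⟨!![-1,0;0,1], !![-1,0;0,1], by decide, by decide⟩
def Tmat : GL2Z := ⟨!![0,-1;1,0], !![0,1;-1,0], by decide, by decide⟩
def Umat : GL2Z := ⟨!![0,-1;1,1], !![1,1;-1,0], by decide, by decide⟩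

namespace Matrix.GeneralLinearGroup

variable {n : Type*} [Fintype n] [DecidableEq n]

lemma scalar_neg_one : scalar n (-1 : ℤˣ) = -1 := by
  ext : 1; simp

lemma mem_center_iff_eq_one_or_eq_neg_one {g : GL n ℤ} :
    g ∈ Subgroup.center (GL n ℤ) ↔ g = 1 ∨ g = -1 := by
  rw [center_eq_range_scalar]
  constructor
  · rintro ⟨u, rfl⟩
    rcases Int.units_eq_one_or u with rfl | rfl
    · exact Or.inl (map_one _)
    · exact Or.inr scalar_neg_one
  · rintro (rfl | rfl)
    · exact ⟨1, map_one _⟩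
    · exact ⟨-1, scalar_neg_one⟩

lemma mk_eq_mk_iff {g h : GL n ℤ} :
    (g : GL n ℤ ⧸ Subgroup.center (GL n ℤ)) = h ↔ g = h ∨ g = -h := by
  rw [QuotientGroup.eq, mem_center_iff_eq_one_or_eq_neg_one, inv_mul_eq_one, inv_mul_eq_iff_eq_mul,
    mul_neg_one, eq_comm (a := h), neg_eq_iff_eq_neg]

lemma commute_mk_iff {g h : GL n ℤ} :
    Commute (g : GL n ℤ ⧸ Subgroup.center (GL n ℤ)) h ↔ Commute g h ∨ g * h = -(h * g) :=
  mk_eq_mk_iff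

lemma det_eq_one_or_eq_neg_one (g : GL n ℤ) :
    (g : Matrix n n ℤ).det = 1 ∨ (g : Matrix n n ℤ).det = -1 :=
  Int.isUnit_iff.1 (isUnits_det_units g)

end Matrix.GeneralLinearGroup

lemma Int.eq_of_sq_add_sq_eq_one {a b : ℤ} (h : a ^ 2 + b ^ 2 = 1) :
    a = 1 ∧ b = 0 ∨ a = -1 ∧ b = 0 ∨ a = 0 ∧ b = 1 ∨ a = 0 ∧ b = -1 := by
  obtain ⟨ha₁, ha₂⟩ := abs_le.1 <| (sq_le_one_iff_abs_le_one a).1 (by nlinarith [sq_nonneg b])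
  obtain ⟨hb₁, hb₂⟩ := abs_le.1 <| (sq_le_one_iff_abs_le_one b).1 (by nlinarith [sq_nonneg a])
  interval_cases a <;> interval_cases b <;> omega

lemma cls_mul (M X : GL2Z) : cls (M * X) = cls M * cls X := rfl

lemma cls_neg (M : GL2Z) : cls (-M) = cls M :=
  GeneralLinearGroup.mk_eq_mk_iff.2 (Or.inr rfl)

lemma Nmat_mul_self : Nmat * Nmat = 1 := Units.ext (by decide)

lemma Nmat_mul_Tmat : Nmat * Tmat = Smat := Units.ext (by decide)

lemma Nmat_mul_Tmat_eq_neg_Tmat_mul_Nmat : Nmat * Tmat = -(Tmat * Nmat) :=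
  Units.ext (by decide)

lemma eq_of_commute_Tmat {M : GL2Z} (h : Commute M Tmat) :
    M = 1 ∨ M = -1 ∨ M = Tmat ∨ M = -Tmat := by
  obtain ⟨a, b, c, d, hM⟩ : ∃ a b c d, (M : Matrix (Fin 2) (Fin 2) ℤ) = !![a, b; c, d] :=
    ⟨_, _, _, _, eta_fin_two _⟩
  have hdet := M.det_eq_one_or_eq_neg_one
  replace h := congrArg Units.val h.eq
  rw [Units.val_mul, Units.val_mul, hM,
    show (Tmat : Matrix (Fin 2) (Fin 2) ℤ) = !![0, -1; 1, 0] from rfl, mul_fin_two,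
    mul_fin_two] at h
  simp only [EmbeddingLike.apply_eq_iff_eq, vecCons_inj, and_true] at h
  obtain ⟨⟨hc, hd⟩, -⟩ := h
  obtain rfl : c = -b := by omega
  obtain rfl : a = d := by omega
  rw [hM, det_fin_two_of] at hdet
  have hab : a ^ 2 + b ^ 2 = 1 := by
    rcases hdet with hdet | hdet
    · linear_combination hdet
    · nlinarith [sq_nonneg a, sq_nonneg b]
  simp only [Units.ext_iff, hM, Units.val_one, Units.val_neg]
  rcases Int.eq_of_sq_add_sq_eq_one hab with
    ⟨rfl, rfl⟩ | ⟨rfl, rfl⟩ | ⟨rfl, rfl⟩ | ⟨rfl, rfl⟩ <;> decide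

lemma cls_eq_one_or_eq_cls_Tmat_of_commute {M : GL2Z} (h : Commute M Tmat) :
    cls M = 1 ∨ cls M = cls Tmat := by
  rcases eq_of_commute_Tmat h with rfl | rfl | rfl | rfl
  · exact Or.inl rfl
  · exact Or.inl (cls_neg 1)
  · exact Or.inr rfl
  · exact Or.inr (cls_neg Tmat)

lemma cls_eq_of_commute_cls_Tmat {M : GL2Z} (h : Commute (cls M) (cls Tmat)) :
    cls M = 1 ∨ cls M = cls Smat ∨ cls M = cls Nmat ∨ cls M = cls Tmat := by
  rcases GeneralLinearGroup.commute_mk_iff.1 h with hc | ha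
  · rcases cls_eq_one_or_eq_cls_Tmat_of_commute hc with h | h <;> simp [h]
  · have hc : Commute (Nmat * M) Tmat := by
      rw [Commute, SemiconjBy, mul_assoc, ha, mul_neg, ← mul_assoc,
        Nmat_mul_Tmat_eq_neg_Tmat_mul_Nmat, neg_mul, neg_neg, mul_assoc]
    have hM : cls M = cls Nmat * cls (Nmat * M) := by
      rw [← cls_mul, ← mul_assoc, Nmat_mul_self, one_mul]
    rcases cls_eq_one_or_eq_cls_Tmat_of_commute hc with h | h
    · exact Or.inr (Or.inr (Or.inl (by rw [hM, h, mul_one])))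
    · exact Or.inr (Or.inl (by rw [hM, h, ← cls_mul, Nmat_mul_Tmat]))

/-- If p ∈ PGL(2,ℤ) has order 2 and commutes with [T], then p is [S], [N], or [T]. -/
theorem stmt_13 (p : PGL2Z) (hp : orderOf p = 2) (hc : Commute p (cls Tmat)) :
    p = cls Smat ∨ p = cls Nmat ∨ p = cls Tmat := by
  obtain ⟨M, rfl⟩ := QuotientGroup.mk_surjective p
  rcases cls_eq_of_commute_cls_Tmat hc with h | h
  · rw [show (M : PGL2Z) = cls M from rfl, h, orderOf_one] at hp
    cases hp
  · exact h
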